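/- arXiv:1510.07821 — 8 statements merged into one kernel-verified Lean document; each statement's English description precedes it below -/
import Mathlib

section
/- Let P : ℝⁿ → ℝ be ρ-weakly convex and αρ < 1. Then the scaled operator S_α(x) = T_α((1 − αρ)x) is the proximity operator of the convex function t ↦ (α/(1−αρ))((ρ/2)‖t‖² + P(t)), i.e., S_α(x) = argmin_t (1/2)‖x − t‖² + (α/(1−αρ))((ρ/2)‖t‖² + P(t)), and hence S_α is 1/2-averaged, i.e., S_α = (1/2)I + (1/2)U for some non-expansive U. -/
open Set

theorem scaled_prox_is_half_averaged
    (n : ℕ)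
    (P : EuclideanSpace ℝ (Fin n) → ℝ)
    (ρ α : ℝ) (hα : 0 < α) (hρ : 0 ≤ ρ) (hαρ : α * ρ < 1)
    (hweak : ConvexOn ℝ univ (fun x => P x + ρ / 2 * ‖x‖ ^ 2))
    (T : EuclideanSpace ℝ (Fin n) → EuclideanSpace ℝ (Fin n))
    (hT : ∀ z x, 1 / (2 * α) * ‖T z - z‖ ^ 2 + P (T z) ≤ 1 / (2 * α) * ‖x - z‖ ^ 2 + P x)
    (S : EuclideanSpace ℝ (Fin n) → EuclideanSpace ℝ (Fin n))
    (hS : ∀ x, S x = T ((1 - α * ρ) • x)) :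
    (∀ x t, 1 / 2 * ‖x - S x‖ ^ 2 + α / (1 - α * ρ) * (ρ / 2 * ‖S x‖ ^ 2 + P (S x))
        ≤ 1 / 2 * ‖x - t‖ ^ 2 + α / (1 - α * ρ) * (ρ / 2 * ‖t‖ ^ 2 + P t)) ∧
    ∃ U : EuclideanSpace ℝ (Fin n) → EuclideanSpace ℝ (Fin n),
      LipschitzWith 1 U ∧ ∀ x, S x = (1 / 2 : ℝ) • x + (1 / 2 : ℝ) • U x := by
  have hc : (0:ℝ) < 1 - α * ρ := by linarith
  set g : EuclideanSpace ℝ (Fin n) → ℝ :=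
    fun t => α / (1 - α * ρ) * (ρ / 2 * ‖t‖ ^ 2 + P t) with hg_def
  -- key algebraic identity
  have key : ∀ (x s : EuclideanSpace ℝ (Fin n)),
      1 / 2 * ‖x - s‖ ^ 2 + g s
        = α / (1 - α * ρ) * (1 / (2 * α) * ‖s - (1 - α * ρ) • x‖ ^ 2 + P s)
          + (α * ρ) / 2 * ‖x‖ ^ 2 := by
    intro x s
    have e1 : ‖x - s‖ ^ 2 = ‖x‖ ^ 2 - 2 * inner ℝ x s + ‖s‖ ^ 2 := by
      rw [@norm_sub_sq_real]
    have e2 : ‖s - (1 - α * ρ) • x‖ ^ 2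
        = ‖s‖ ^ 2 - 2 * ((1 - α * ρ) * inner ℝ s x) + (1 - α * ρ) ^ 2 * ‖x‖ ^ 2 := by
      rw [@norm_sub_sq_real, real_inner_smul_right, norm_smul, Real.norm_eq_abs,
        abs_of_pos hc, mul_pow]
    have e3 : (inner ℝ s x : ℝ) = inner ℝ x s := real_inner_comm x s
    rw [hg_def]
    rw [e1, e2, e3]
    field_simp
    ring
  -- main minimization property of S
  have hmain : ∀ x t, 1 / 2 * ‖x - S x‖ ^ 2 + g (S x) ≤ 1 / 2 * ‖x - t‖ ^ 2 + g t := by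
    intro x t
    have h := hT ((1 - α * ρ) • x) t
    rw [← hS x] at h
    have h' := mul_le_mul_of_nonneg_left h (le_of_lt (div_pos hα hc))
    have k1 := key x (S x)
    have k2 := key x t
    nlinarith [h']
  -- convexity of g
  have hg : ConvexOn ℝ (univ : Set (EuclideanSpace ℝ (Fin n))) g := by
    have h := hweak.smul (le_of_lt (div_pos hα hc))
    have e : g = fun x => (α / (1 - α * ρ)) • (P x + ρ / 2 * ‖x‖ ^ 2) := by
      funext t; simp only [hg_def, smul_eq_mul]; ring
    rw [e]; exact h
  -- subgradient inequality
  have hsub : ∀ x t, (inner ℝ (x - S x) (t - S x) : ℝ) ≤ g t - g (S x) := by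
    intro x t
    have hstep : ∀ l : ℝ, 0 < l → l ≤ 1 →
        (inner ℝ (x - S x) (t - S x) : ℝ) ≤ g t - g (S x) + l / 2 * ‖t - S x‖ ^ 2 := by
      intro l hl hl1
      have h := hmain x ((1 - l) • (S x) + l • t)
      have hcc := hg.2 (mem_univ (S x)) (mem_univ t)
        (by linarith : (0:ℝ) ≤ 1 - l) hl.le (by ring)
      simp only [smul_eq_mul] at hcc
      have hv : x - ((1 - l) • (S x) + l • t) = (x - S x) - l • (t - S x) := by
        module
      have hq : ‖x - ((1 - l) • (S x) + l • t)‖ ^ 2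
          = ‖x - S x‖ ^ 2 - 2 * (l * (inner ℝ (x - S x) (t - S x) : ℝ))
            + l ^ 2 * ‖t - S x‖ ^ 2 := by
        rw [hv, @norm_sub_sq_real, real_inner_smul_right, norm_smul, Real.norm_eq_abs,
          mul_pow, sq_abs]
      rw [hq] at h
      have h2 : l * (inner ℝ (x - S x) (t - S x) : ℝ)
          ≤ l * (g t - g (S x) + l / 2 * ‖t - S x‖ ^ 2) := by
        nlinarith [h, hcc]
      exact (mul_le_mul_iff_right₀ hl).mp h2
    refine le_of_forall_pos_le_add ?_
    intro ε hε
    set D := ‖t - S x‖ ^ 2 with hD_def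
    have hD : 0 ≤ D := by positivity
    have hlpos : 0 < min 1 (ε / (D + 1)) := lt_min one_pos (div_pos hε (by linarith))
    have hst := hstep _ hlpos (min_le_left _ _)
    have h1 : min 1 (ε / (D + 1)) ≤ ε / (D + 1) := min_le_right _ _
    have h1' : min 1 (ε / (D + 1)) * (D + 1) ≤ ε := by
      rw [← le_div_iff₀ (by linarith : (0:ℝ) < D + 1)]; exact h1
    have h2 : min 1 (ε / (D + 1)) / 2 * D ≤ ε := by
      nlinarith [mul_nonneg hlpos.le hD]
    linarith
  -- firm nonexpansiveness
  have hfirm : ∀ x y, ‖S x - S y‖ ^ 2 ≤ (inner ℝ (x - y) (S x - S y) : ℝ) := by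
    intro x y
    have h1 := hsub x (S y)
    have h2 := hsub y (S x)
    have hid : (inner ℝ (x - S x) (S y - S x) : ℝ) + (inner ℝ (y - S y) (S x - S y) : ℝ)
        = ‖S x - S y‖ ^ 2 - (inner ℝ (x - y) (S x - S y) : ℝ) := by
      simp only [inner_sub_left, inner_sub_right, ← real_inner_self_eq_norm_sq]
      ring
    linarith
  refine ⟨hmain, fun x => (2:ℝ) • S x - x, ?_, ?_⟩
  · apply LipschitzWith.of_dist_le_mul
    intro x y
    rw [dist_eq_norm, dist_eq_norm]
    have hv : ((2:ℝ) • S x - x) - ((2:ℝ) • S y - y) = (2:ℝ) • (S x - S y) - (x - y) := by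
      module
    have hq : ‖(2:ℝ) • (S x - S y) - (x - y)‖ ^ 2
        = 4 * ‖S x - S y‖ ^ 2 - 4 * (inner ℝ (S x - S y) (x - y) : ℝ) + ‖x - y‖ ^ 2 := by
      rw [@norm_sub_sq_real, real_inner_smul_left, norm_smul, Real.norm_eq_abs, mul_pow]
      norm_num
      ring
    have hcomm := real_inner_comm (x - y) (S x - S y)
    have hf := hfirm x y
    have hsq : ‖(2:ℝ) • (S x - S y) - (x - y)‖ ^ 2 ≤ ‖x - y‖ ^ 2 := by
      rw [hq]; linarith
    rw [hv]
    have := Real.sqrt_le_sqrt hsq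
    rw [Real.sqrt_sq (norm_nonneg _), Real.sqrt_sq (norm_nonneg _)] at this
    simpa using this
  · intro x
    module
end

section
/- Let P : ℝⁿ → ℝ be ρ-weakly convex, f : ℝⁿ → ℝ differentiable and ρ-strongly convex, and α > 0 with αρ < 1. Then x = T_α(x − α∇f(x)) if and only if x is a global minimizer of f + P, where T_α(z) = argmin_t (1/(2α))‖t − z‖² + P(t). -/
/-!
Split `f + P = g + h` with `g = f - (ρ/2)‖·‖²` and `h = P + (ρ/2)‖·‖²`, both convex, `g`
differentiable with `∇g x = ∇f x - ρ x`. Then `x` minimizes `f + P` iff `ρ x - ∇f x` is a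
subgradient of `h` at `x`. Expanding the proximal objective, `x = T_α (x - α ∇f x)` says that the
same subgradient inequality holds up to the slack `(1/(2α) - ρ/2)‖y - x‖²`, which is nonnegative
as `αρ < 1`. The slack can be dropped for convex `h`: along the segment from `x` to `y` it is
quadratic in the step length, hence negligible against the linear terms.
-/

open Set Filter Topology
open scoped RealInnerProductSpace

section ConvexAnalysis

variable {E : Type*} [NormedAddCommGroup E] [InnerProductSpace ℝ E]

def HasSubgradientAt (h : E → ℝ) (v x : E) : Prop :=
  ∀ y, h x + ⟪v, y - x⟫ ≤ h y

theorem HasDerivAt.nonneg_of_le_of_mem_Ioc {ψ : ℝ → ℝ} {d : ℝ} (hψ : HasDerivAt ψ d 0)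
    (hle : ∀ l ∈ Ioc (0 : ℝ) 1, ψ 0 ≤ ψ l) : 0 ≤ d := by
  have hslope : Tendsto (slope ψ 0) (𝓝[>] 0) (𝓝 d) :=
    (hasDerivAt_iff_tendsto_slope.mp hψ).mono_left (nhdsGT_le_nhdsNE 0)
  refine ge_of_tendsto hslope ?_
  filter_upwards [Ioc_mem_nhdsGT zero_lt_one] with l hl
  rw [slope_def_field, sub_zero]
  exact div_nonneg (sub_nonneg.mpr (hle l hl)) hl.1.le

theorem HasGradientAt.hasDerivAt_add_smul [CompleteSpace E] {g : E → ℝ} {w x : E}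
    (hg : HasGradientAt g w x) (d : E) :
    HasDerivAt (fun l : ℝ => g (x + l • d)) ⟪w, d⟫ 0 := by
  have hline : HasDerivAt (fun l : ℝ => x + l • d) d 0 :=
    ((hasDerivAt_id 0).smul_const d).const_add x |>.congr_deriv (one_smul ℝ d)
  exact ((hasGradientAt_iff_hasFDerivAt.mp hg).comp_hasDerivAt_of_eq 0 hline (by simp)).congr_deriv
    (by simp)

theorem HasGradientAt.sub_mul_norm_sq [CompleteSpace E] {f : E → ℝ} {w x : E}
    (hf : HasGradientAt f w x) (c : ℝ) :
    HasGradientAt (fun y => f y - c * ‖y‖ ^ 2) (w - (2 * c) • x) x := by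
  rw [hasGradientAt_iff_hasFDerivAt] at hf ⊢
  refine (hf.sub ((hasStrictFDerivAt_norm_sq x).hasFDerivAt.const_mul c)).congr_fderiv ?_
  ext v
  simp
  ring

theorem ConvexOn.le_add_smul_sub {h : E → ℝ} (hh : ConvexOn ℝ univ h) (x y : E) {l : ℝ}
    (hl₀ : 0 ≤ l) (hl₁ : l ≤ 1) : h (x + l • (y - x)) ≤ h x + l * (h y - h x) := by
  have hcomb : x + l • (y - x) = (1 - l) • x + l • y := by
    rw [sub_smul, one_smul, smul_sub]; abel
  have := hh.2 (mem_univ x) (mem_univ y) (sub_nonneg.mpr hl₁) hl₀ (sub_add_cancel 1 l)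
  rw [hcomb]
  simp only [smul_eq_mul] at this
  linarith

theorem ConvexOn.hasSubgradientAt_of_hasGradientAt [CompleteSpace E] {g : E → ℝ}
    (hg : ConvexOn ℝ univ g) {w x : E} (hw : HasGradientAt g w x) : HasSubgradientAt g w x := by
  intro y
  have hψ : HasDerivAt (fun l => g x + l * (g y - g x) - g (x + l • (y - x)))
      (g y - g x - ⟪w, y - x⟫) 0 :=
    ((((hasDerivAt_id' (0 : ℝ)).mul_const (g y - g x)).const_add (g x)).fun_sub
      (hw.hasDerivAt_add_smul (y - x))).congr_deriv (by simp)
  have hderiv := hψ.nonneg_of_le_of_mem_Ioc fun l hl => by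
    simpa using hg.le_add_smul_sub x y hl.1.le hl.2
  linarith

theorem ConvexOn.hasSubgradientAt_iff_le_add_mul_sq {h : E → ℝ} (hh : ConvexOn ℝ univ h)
    {v x : E} {c : ℝ} (hc : 0 ≤ c) :
    HasSubgradientAt h v x ↔ ∀ y, h x + ⟪v, y - x⟫ ≤ h y + c * ‖y - x‖ ^ 2 := by
  refine ⟨fun hv y => (hv y).trans (le_add_of_nonneg_right (by positivity)), fun hv y => ?_⟩
  set a := h y - h x - ⟪v, y - x⟫
  have hψ : HasDerivAt (fun l : ℝ => l * a + c * ‖y - x‖ ^ 2 * l ^ 2) a 0 :=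
    (((hasDerivAt_id' (0 : ℝ)).mul_const a).fun_add
      ((hasDerivAt_pow 2 (0 : ℝ)).const_mul (c * ‖y - x‖ ^ 2))).congr_deriv (by simp)
  have hderiv := hψ.nonneg_of_le_of_mem_Ioc fun l hl => by
    have hconv := hh.le_add_smul_sub x y hl.1.le hl.2
    have hbound := hv (x + l • (y - x))
    rw [add_sub_cancel_left, inner_smul_right, norm_smul, mul_pow, Real.norm_eq_abs, sq_abs]
      at hbound
    simp only [a]
    linarith
  linarith

theorem ConvexOn.forall_add_le_add_iff_hasSubgradientAt [CompleteSpace E] {g h : E → ℝ}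
    (hg : ConvexOn ℝ univ g) (hh : ConvexOn ℝ univ h) {w x : E} (hw : HasGradientAt g w x) :
    (∀ y, g x + h x ≤ g y + h y) ↔ HasSubgradientAt h (-w) x := by
  refine ⟨fun hmin y => ?_, fun hv y => ?_⟩
  · have hψ : HasDerivAt (fun l => g (x + l • (y - x)) + l * (h y - h x))
        (⟪w, y - x⟫ + (h y - h x)) 0 :=
      ((hw.hasDerivAt_add_smul (y - x)).fun_add
        ((hasDerivAt_id' (0 : ℝ)).mul_const (h y - h x))).congr_deriv (by simp)
    have hderiv := hψ.nonneg_of_le_of_mem_Ioc fun l hl => by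
      have hconv := hh.le_add_smul_sub x y hl.1.le hl.2
      have hle := hmin (x + l • (y - x))
      simp only [zero_smul, add_zero, zero_mul]
      linarith
    rw [inner_neg_left]
    linarith
  · have hg_sub := hg.hasSubgradientAt_of_hasGradientAt hw y
    have hh_sub := hv y
    rw [inner_neg_left] at hh_sub
    linarith

theorem prox_objective_le_iff (P : E → ℝ) {α : ℝ} (hα : α ≠ 0) (c : ℝ) (w x y : E) :
    1 / (2 * α) * ‖x - (x - α • w)‖ ^ 2 + P x ≤ 1 / (2 * α) * ‖y - (x - α • w)‖ ^ 2 + P y ↔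
      P x + c * ‖x‖ ^ 2 + ⟪(2 * c) • x - w, y - x⟫ ≤
        P y + c * ‖y‖ ^ 2 + (1 / (2 * α) - c) * ‖y - x‖ ^ 2 := by
  obtain ⟨d, rfl⟩ : ∃ d, y = x + d := ⟨y - x, (add_sub_cancel x y).symm⟩
  have hshift : x + d - (x - α • w) = d + α • w := by abel
  rw [hshift, sub_sub_cancel, add_sub_cancel_left, norm_add_sq_real, norm_add_sq_real,
    norm_smul, inner_sub_left, inner_smul_left, inner_smul_right, real_inner_comm d w]
  simp only [Real.norm_eq_abs, mul_pow, sq_abs, conj_trivial]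
  have hexpand : 1 / (2 * α) * (‖d‖ ^ 2 + 2 * (α * ⟪d, w⟫) + α ^ 2 * ‖w‖ ^ 2) =
      1 / (2 * α) * (α ^ 2 * ‖w‖ ^ 2) + 1 / (2 * α) * ‖d‖ ^ 2 + ⟪d, w⟫ := by
    field_simp
    ring
  constructor <;> intro <;> linarith

end ConvexAnalysis

theorem ista_fixed_point_iff_minimizer_general
    (n : ℕ)
    (P f : EuclideanSpace ℝ (Fin n) → ℝ)
    (f' : EuclideanSpace ℝ (Fin n) → EuclideanSpace ℝ (Fin n))
    (hf' : ∀ x, HasGradientAt f (f' x) x)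
    (ρ α : ℝ) (hα : 0 < α) (hαρ : α * ρ < 1)
    (hweak : ConvexOn ℝ univ (fun x => P x + ρ / 2 * ‖x‖ ^ 2))
    (hstrong : ConvexOn ℝ univ (fun x => f x - ρ / 2 * ‖x‖ ^ 2))
    (T : EuclideanSpace ℝ (Fin n) → EuclideanSpace ℝ (Fin n))
    (hT : ∀ z t, 1 / (2 * α) * ‖T z - z‖ ^ 2 + P (T z) ≤ 1 / (2 * α) * ‖t - z‖ ^ 2 + P t)
    (hTuniq : ∀ z t,
      (∀ s, 1 / (2 * α) * ‖t - z‖ ^ 2 + P t ≤ 1 / (2 * α) * ‖s - z‖ ^ 2 + P s) → t = T z)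
    (x : EuclideanSpace ℝ (Fin n)) :
    x = T (x - α • f' x) ↔ ∀ z, f x + P x ≤ f z + P z := by
  have hslack : 0 ≤ 1 / (2 * α) - ρ / 2 := by
    rw [sub_nonneg, div_le_div_iff₀ two_pos (by positivity)]
    linarith
  have hmin : (∀ z, f x + P x ≤ f z + P z) ↔
      HasSubgradientAt (fun y => P y + ρ / 2 * ‖y‖ ^ 2) ((2 * (ρ / 2)) • x - f' x) x := by
    simpa only [sub_add_add_cancel, neg_sub] using
      hstrong.forall_add_le_add_iff_hasSubgradientAt hweak ((hf' x).sub_mul_norm_sq (ρ / 2))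
  rw [hmin, hweak.hasSubgradientAt_iff_le_add_mul_sq hslack,
    ← forall_congr' (prox_objective_le_iff P hα.ne' (ρ / 2) (f' x) x)]
  refine ⟨fun hfix y => ?_, hTuniq _ x⟩
  have := hT (x - α • f' x) y
  rwa [← hfix] at this

theorem ista_fixed_point_iff_minimizer
    (n : ℕ)
    (P f : EuclideanSpace ℝ (Fin n) → ℝ)
    (f' : EuclideanSpace ℝ (Fin n) → EuclideanSpace ℝ (Fin n))
    (hf' : ∀ x, HasGradientAt f (f' x) x)
    (ρ α : ℝ) (hρ : 0 ≤ ρ) (hα : 0 < α) (hαρ : α * ρ < 1)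
    (hweak : ConvexOn ℝ univ (fun x => P x + ρ / 2 * ‖x‖ ^ 2))
    (hstrong : ConvexOn ℝ univ (fun x => f x - ρ / 2 * ‖x‖ ^ 2))
    (T : EuclideanSpace ℝ (Fin n) → EuclideanSpace ℝ (Fin n))
    (hT : ∀ z t, 1 / (2 * α) * ‖T z - z‖ ^ 2 + P (T z) ≤ 1 / (2 * α) * ‖t - z‖ ^ 2 + P t)
    (hTuniq : ∀ z t,
      (∀ s, 1 / (2 * α) * ‖t - z‖ ^ 2 + P t ≤ 1 / (2 * α) * ‖s - z‖ ^ 2 + P s) → t = T z)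
    (x : EuclideanSpace ℝ (Fin n)) :
    x = T (x - α • f' x) ↔ ∀ z, f x + P x ≤ f z + P z :=
  ista_fixed_point_iff_minimizer_general n P f f' hf' ρ α hα hαρ hweak hstrong T hT hTuniq x
end

section
/- Let S : ℝⁿ → ℝⁿ be the affine map S(x) = Mx + u with M a symmetric n×n real matrix and u a fixed vector. Then S is β-averaged for some β ∈ (0,1) if and only if all eigenvalues of M lie in the interval (−1, 1]. -/
/-!
`S` is `β`-averaged iff `β⁻¹ • (S - (1 - β) • id)` is non-expansive. For affine `S` this says
`‖(M - (1 - β)) v‖ ≤ β ‖v‖`, which, read in an orthonormal eigenbasis of `M`, means that every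
eigenvalue lies in `[1 - 2β, 1]`. Finitely many eigenvalues in `(-1, 1]` fit into such an
interval once `β` is close enough to `1`.
-/

open Set Filter Topology

namespace OrthonormalBasis

variable {𝕜 ι E : Type*} [RCLike 𝕜] [Fintype ι] [NormedAddCommGroup E] [InnerProductSpace 𝕜 E]

theorem repr_apply_of_apply_eq_smul (b : OrthonormalBasis ι 𝕜 E) {T : E →ₗ[𝕜] E} {μ : ι → 𝕜}
    (hT : ∀ i, T (b i) = μ i • b i) (v : E) (i : ι) :
    b.repr (T v) i = μ i * b.repr v i := by
  have hTv : T v = b.repr.symm (WithLp.toLp 2 fun j => μ j * b.repr v j) := by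
    conv_lhs => rw [← b.sum_repr v]
    simp [← b.sum_repr_symm, map_sum, hT, smul_smul, mul_comm]
  simp [hTv]

theorem norm_apply_le_iff_of_apply_eq_smul (b : OrthonormalBasis ι 𝕜 E) {T : E →ₗ[𝕜] E}
    {μ : ι → 𝕜} (hT : ∀ i, T (b i) = μ i • b i) {r : ℝ} (hr : 0 ≤ r) :
    (∀ v, ‖T v‖ ≤ r * ‖v‖) ↔ ∀ i, ‖μ i‖ ≤ r := by
  refine ⟨fun h i => by simpa [hT, norm_smul, b.orthonormal.1 i] using h (b i), fun h v => ?_⟩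
  refine (sq_le_sq₀ (norm_nonneg _) (by positivity)).1 ?_
  rw [← b.repr.norm_map, ← b.repr.norm_map v, mul_pow, EuclideanSpace.norm_sq_eq,
    EuclideanSpace.norm_sq_eq, Finset.mul_sum]
  gcongr with i
  rw [b.repr_apply_of_apply_eq_smul hT, norm_mul, mul_pow]
  gcongr
  exact h i

end OrthonormalBasis

section Averaged

variable {E : Type*} [NormedAddCommGroup E] [NormedSpace ℝ E]

def IsAveraged (β : ℝ) (S : E → E) : Prop :=
  ∃ U : E → E, LipschitzWith 1 U ∧ ∀ x, S x = (1 - β) • x + β • U x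

theorem isAveraged_iff_lipschitzWith {β : ℝ} (hβ : β ≠ 0) {S : E → E} :
    IsAveraged β S ↔ LipschitzWith 1 fun x => β⁻¹ • (S x - (1 - β) • x) := by
  refine ⟨fun ⟨U, hU, hSU⟩ => ?_, fun h => ⟨_, h, fun x => ?_⟩⟩
  · convert hU using 2 with x
    rw [hSU, add_sub_cancel_left, inv_smul_smul₀ hβ]
  · rw [smul_inv_smul₀ hβ, add_sub_cancel]

theorem isAveraged_affine_iff {β : ℝ} (hβ : 0 < β) (A : E →ₗ[ℝ] E) (u : E) :
    IsAveraged β (fun x => A x + u) ↔ ∀ v, ‖A v - (1 - β) • v‖ ≤ β * ‖v‖ := by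
  have hdiff : ∀ x y, β⁻¹ • (A x + u - (1 - β) • x) - β⁻¹ • (A y + u - (1 - β) • y)
      = β⁻¹ • (A (x - y) - (1 - β) • (x - y)) := fun x y => by rw [map_sub]; module
  simp only [isAveraged_iff_lipschitzWith hβ.ne', lipschitzWith_iff_norm_sub_le, hdiff,
    norm_smul, NNReal.coe_one, one_mul, Real.norm_eq_abs, abs_inv, abs_of_pos hβ,
    inv_mul_le_iff₀ hβ]
  exact ⟨fun h v => by simpa using h v 0, fun h x y => h (x - y)⟩

end Averaged

theorem exists_mem_Ioo_forall_abs_sub_le_iff {ι : Type*} [Finite ι] (f : ι → ℝ) :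
    (∃ β ∈ Ioo (0 : ℝ) 1, ∀ i, |f i - (1 - β)| ≤ β) ↔ ∀ i, f i ∈ Ioc (-1 : ℝ) 1 := by
  simp only [abs_sub_le_iff, mem_Ioc]
  constructor
  · rintro ⟨β, ⟨-, hβ1⟩, h⟩ i
    constructor <;> linarith [h i]
  · intro h
    have hnear : ∀ᶠ β in 𝓝 (1 : ℝ), 0 < β ∧ ∀ i, (1 - f i) / 2 < β :=
      (eventually_gt_nhds one_pos).and <| eventually_all.2 fun i =>
        eventually_gt_nhds (by linarith [(h i).1])
    obtain ⟨β, ⟨hβ0, hβ⟩, hβ1⟩ :=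
      (hnear.filter_mono nhdsWithin_le_nhds).and (self_mem_nhdsWithin (s := Iio 1)) |>.exists
    exact ⟨β, ⟨hβ0, hβ1⟩, fun i => ⟨by linarith [(h i).2], by linarith [hβ i]⟩⟩

theorem Matrix.IsHermitian.toEuclideanLin_eigenvectorBasis {𝕜 ι : Type*} [RCLike 𝕜] [Fintype ι]
    [DecidableEq ι] {M : Matrix ι ι 𝕜} (hM : M.IsHermitian) (i : ι) :
    M.toEuclideanLin (hM.eigenvectorBasis i) = (hM.eigenvalues i : 𝕜) • hM.eigenvectorBasis i := by
  ext j
  simp [Matrix.toLpLin_apply, hM.mulVec_eigenvectorBasis]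

theorem affine_symmetric_averaged_iff_eigenvalues
    (n : ℕ)
    (M : Matrix (Fin n) (Fin n) ℝ)
    (hM : M.IsHermitian)
    (u : EuclideanSpace ℝ (Fin n))
    (S : EuclideanSpace ℝ (Fin n) → EuclideanSpace ℝ (Fin n))
    (hS : ∀ x, S x = Matrix.toEuclideanLin M x + u) :
    (∃ β ∈ Ioo (0 : ℝ) 1, ∃ U : EuclideanSpace ℝ (Fin n) → EuclideanSpace ℝ (Fin n),
        LipschitzWith 1 U ∧ ∀ x, S x = (1 - β) • x + β • U x)
      ↔ ∀ i, hM.eigenvalues i ∈ Ioc (-1 : ℝ) 1 := by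
  change (∃ β ∈ Ioo (0 : ℝ) 1, IsAveraged β S) ↔ _
  obtain rfl : S = fun x => Matrix.toEuclideanLin M x + u := funext hS
  rw [← exists_mem_Ioo_forall_abs_sub_le_iff]
  refine exists_congr fun β => and_congr_right fun hβ => ?_
  set T : EuclideanSpace ℝ (Fin n) →ₗ[ℝ] EuclideanSpace ℝ (Fin n) :=
    Matrix.toEuclideanLin M - (1 - β) • LinearMap.id
  have hT (i : Fin n) :
      T (hM.eigenvectorBasis i) = (hM.eigenvalues i - (1 - β)) • hM.eigenvectorBasis i := by
    simp [T, hM.toEuclideanLin_eigenvectorBasis, sub_smul]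
  have hspec := hM.eigenvectorBasis.norm_apply_le_iff_of_apply_eq_smul hT hβ.1.le
  simp only [T, LinearMap.sub_apply, LinearMap.smul_apply, LinearMap.id_apply,
    Real.norm_eq_abs] at hspec
  exact (isAveraged_affine_iff hβ.1 _ u).trans hspec
end

section
/- (Krasnosels'kiĭ–Mann in ℝⁿ) Let S : ℝⁿ → ℝⁿ be β-averaged for some β ∈ (0,1) and suppose its fixed point set is non-empty. Then for any x⁰, the sequence defined by xⁿ⁺¹ = S(xⁿ) converges, and its limit is a fixed point of S. -/
/-!
`S` and `U` have the same fixed points, and for such a point `z` the parallelogram law gives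
the Fejér inequality `‖S x - z‖² ≤ ‖x - z‖² - β(1-β)‖x - U x‖²`. Hence the iterates stay in a
ball around `z` and `x k - U (x k) → 0`. By compactness some subsequence converges, its limit
`L` is a fixed point of `U`, and since the distance to `L` is non-increasing along the orbit,
the whole sequence converges to `L`.
-/

open Set Filter Topology

section Averaged

variable {E : Type*} [NormedAddCommGroup E] [InnerProductSpace ℝ E]

def averagedMap (β : ℝ) (U : E → E) (x : E) : E := (1 - β) • x + β • U x

theorem norm_one_sub_smul_add_smul_sq (β : ℝ) (u v : E) :
    ‖(1 - β) • u + β • v‖ ^ 2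
      = (1 - β) * ‖u‖ ^ 2 + β * ‖v‖ ^ 2 - β * (1 - β) * ‖u - v‖ ^ 2 := by
  rw [norm_add_sq_real, norm_sub_sq_real, real_inner_smul_left, real_inner_smul_right,
    norm_smul, norm_smul, mul_pow, mul_pow, Real.norm_eq_abs, Real.norm_eq_abs, sq_abs, sq_abs]
  ring

variable {β : ℝ} {U : E → E}

theorem isFixedPt_averagedMap_iff (hβ : β ≠ 0) {z : E} :
    Function.IsFixedPt (averagedMap β U) z ↔ Function.IsFixedPt U z := by
  have h : averagedMap β U z - z = β • (U z - z) := by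
    rw [averagedMap, smul_sub]; module
  rw [Function.IsFixedPt, Function.IsFixedPt, ← sub_eq_zero, h, smul_eq_zero, sub_eq_zero,
    or_iff_right hβ]

theorem norm_averagedMap_sub_sq_le (hβ : 0 ≤ β) (hU : LipschitzWith 1 U) {z : E}
    (hz : Function.IsFixedPt U z) (x : E) :
    ‖averagedMap β U x - z‖ ^ 2 ≤ ‖x - z‖ ^ 2 - β * (1 - β) * ‖x - U x‖ ^ 2 := by
  have hUxz : ‖U x - z‖ ≤ ‖x - z‖ := by
    simpa [hz.eq, dist_eq_norm] using hU.dist_le_mul x z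
  have hsq : ‖U x - z‖ ^ 2 ≤ ‖x - z‖ ^ 2 := pow_le_pow_left₀ (norm_nonneg _) hUxz 2
  have hsplit : averagedMap β U x - z = (1 - β) • (x - z) + β • (U x - z) := by
    rw [averagedMap]; module
  rw [hsplit, norm_one_sub_smul_add_smul_sq, sub_sub_sub_cancel_right]
  nlinarith

variable {x : ℕ → E} (hx : ∀ k, x (k + 1) = averagedMap β U (x k))
include hx

theorem antitone_dist_averagedMap_orbit (hβ : β ∈ Icc 0 1) (hU : LipschitzWith 1 U) {z : E}
    (hz : Function.IsFixedPt U z) : Antitone fun k => dist (x k) z := by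
  refine antitone_nat_of_succ_le fun k => ?_
  have hdecr := norm_averagedMap_sub_sq_le hβ.1 hU hz (x k)
  have hc : 0 ≤ β * (1 - β) := mul_nonneg hβ.1 (sub_nonneg.2 hβ.2)
  rw [dist_eq_norm, dist_eq_norm, hx]
  exact pow_le_pow_iff_left₀ (norm_nonneg _) (norm_nonneg _) two_ne_zero |>.1 <| by
    nlinarith [mul_nonneg hc (sq_nonneg ‖x k - U (x k)‖)]

theorem tendsto_averagedMap_orbit_sub_apply (hβ : β ∈ Ioo 0 1) (hU : LipschitzWith 1 U) {z : E}
    (hz : Function.IsFixedPt U z) : Tendsto (fun k => x k - U (x k)) atTop (𝓝 0) := by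
  set a : ℕ → ℝ := fun k => ‖x k - z‖ ^ 2
  have hc : 0 < β * (1 - β) := mul_pos hβ.1 (sub_pos.2 hβ.2)
  have ha : Antitone a := fun i j hij => by
    simpa only [a, ← dist_eq_norm] using
      pow_le_pow_left₀ dist_nonneg (antitone_dist_averagedMap_orbit hx (Ioo_subset_Icc_self hβ)
        hU hz hij) 2
  have ha_lim := tendsto_atTop_ciInf ha ⟨0, by rintro _ ⟨k, rfl⟩; positivity⟩
  have hgap : Tendsto (fun k => (β * (1 - β))⁻¹ * (a k - a (k + 1))) atTop (𝓝 0) := by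
    simpa using (ha_lim.sub (ha_lim.comp (tendsto_add_atTop_nat 1))).const_mul (β * (1 - β))⁻¹
  have hsq : Tendsto (fun k => ‖x k - U (x k)‖ ^ 2) atTop (𝓝 0) := by
    refine squeeze_zero (fun k => sq_nonneg _) (fun k => ?_) hgap
    rw [le_inv_mul_iff₀ hc]
    have := norm_averagedMap_sub_sq_le hβ.1.le hU hz (x k)
    simp only [a, hx]
    linarith
  rw [tendsto_zero_iff_norm_tendsto_zero]
  simpa [Real.sqrt_sq (norm_nonneg _)] using hsq.sqrt

end Averaged

theorem isFixedPt_of_tendsto_sub_apply {E : Type*} [NormedAddCommGroup E] {U : E → E}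
    (hU : Continuous U) {x : ℕ → E} (hreg : Tendsto (fun k => x k - U (x k)) atTop (𝓝 0))
    {φ : ℕ → ℕ} (hφ : StrictMono φ) {L : E} (hL : Tendsto (x ∘ φ) atTop (𝓝 L)) :
    Function.IsFixedPt U L := by
  have h : Tendsto (fun j => x (φ j) - U (x (φ j))) atTop (𝓝 (L - U L)) :=
    hL.sub ((hU.tendsto L).comp hL)
  exact (sub_eq_zero.1 (tendsto_nhds_unique h (hreg.comp hφ.tendsto_atTop))).symm

theorem tendsto_of_antitone_dist_of_subseq {X : Type*} [PseudoMetricSpace X] {x : ℕ → X} {L : X}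
    (hmono : Antitone fun k => dist (x k) L) {φ : ℕ → ℕ} (hφ : StrictMono φ)
    (hL : Tendsto (x ∘ φ) atTop (𝓝 L)) : Tendsto x atTop (𝓝 L) := by
  rw [tendsto_iff_dist_tendsto_zero] at hL ⊢
  exact (tendsto_iff_tendsto_subseq_of_antitone hmono hφ.tendsto_atTop).2 hL

theorem krasnoselskii_mann_finite_dim
    (n : ℕ)
    (S : EuclideanSpace ℝ (Fin n) → EuclideanSpace ℝ (Fin n))
    (β : ℝ) (hβ : β ∈ Ioo (0 : ℝ) 1)
    (U : EuclideanSpace ℝ (Fin n) → EuclideanSpace ℝ (Fin n))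
    (hU : LipschitzWith 1 U)
    (hS : ∀ x, S x = (1 - β) • x + β • U x)
    (hfix : ∃ z, S z = z)
    (x : ℕ → EuclideanSpace ℝ (Fin n))
    (hrec : ∀ k, x (k + 1) = S (x k)) :
    ∃ L, Tendsto x atTop (nhds L) ∧ S L = L := by
  obtain rfl : S = averagedMap β U := funext hS
  obtain ⟨z, hSz⟩ := hfix
  have hz := (isFixedPt_averagedMap_iff hβ.1.ne').1 hSz
  have hfejer {p} (hp : Function.IsFixedPt U p) : Antitone fun k => dist (x k) p :=
    antitone_dist_averagedMap_orbit hrec (Ioo_subset_Icc_self hβ) hU hp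
  obtain ⟨L, -, φ, hφ, hL⟩ := (isCompact_closedBall z (dist (x 0) z)).tendsto_subseq
    fun k => Metric.mem_closedBall.2 (hfejer hz (Nat.zero_le k))
  have hUL : Function.IsFixedPt U L := isFixedPt_of_tendsto_sub_apply hU.continuous
    (tendsto_averagedMap_orbit_sub_apply hrec hβ hU hz) hφ hL
  exact ⟨L, tendsto_of_antitone_dist_of_subseq (hfejer hUL) hφ hL,
    (isFixedPt_averagedMap_iff hβ.1.ne').2 hUL⟩
end

section
/- Suppose f : ℝⁿ → ℝ is ρ-strongly convex, differentiable, with σ-Lipschitz gradient, σ > ρ ≥ 0. If 0 < α < 2/(σ + ρ) (so αρ < 1), then the operator V_α = (1/(1−αρ))(I − α∇f) is β-averaged with β = α(σ + ρ)/2 ∈ (0,1). -/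
/-!
Put `g = f - (ρ / 2) ‖·‖²`. Then `g` is convex, and `((σ - ρ) / 2) ‖·‖² - g = (σ / 2) ‖·‖² - f` is
convex because the Lipschitz bound makes its gradient monotone. By the Baillon–Haddad argument
(the descent lemma applied to `g - ⟪∇g x, ·⟫`) this makes `∇g` `1/(σ - ρ)`-cocoercive. With
`d = ∇f x - ∇f y` and `e = x - y` that gives `ρ ‖e‖² ≤ ⟪d, e⟫` and
`‖d‖² + ρσ ‖e‖² ≤ (σ + ρ) ⟪d, e⟫`. Expanding `‖U x - U y‖²` for `U = (V - (1 - β) I) / β` leaves a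
nonnegative combination of these two inequalities, so `U` is non-expansive.
-/

open Set AffineMap
open scoped RealInnerProductSpace

section InnerProductSpace

variable {E : Type*} [NormedAddCommGroup E] [InnerProductSpace ℝ E]

theorem norm_smul_sub_smul_sq (a b : ℝ) (u v : E) :
    ‖a • u - b • v‖ ^ 2 = a ^ 2 * ‖u‖ ^ 2 - 2 * (a * b) * ⟪u, v⟫ + b ^ 2 * ‖v‖ ^ 2 := by
  rw [norm_sub_sq_real, norm_smul, norm_smul, real_inner_smul_left, real_inner_smul_right,
    Real.norm_eq_abs, Real.norm_eq_abs, mul_pow, mul_pow, sq_abs, sq_abs]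
  ring

theorem norm_smul_sub_smul_le_of_cocoercive {d e : E} {ρ σ α β : ℝ} (hρ : 0 ≤ ρ) (hρσ : ρ ≤ σ)
    (hα : 0 ≤ α) (hβ : β = α * (σ + ρ) / 2) (hβ1 : β ≤ 1) (hmono : ρ * ‖e‖ ^ 2 ≤ ⟪d, e⟫)
    (hcoco : ‖d‖ ^ 2 + ρ * σ * ‖e‖ ^ 2 ≤ (σ + ρ) * ⟪d, e⟫) :
    ‖(α * ρ + β * (1 - α * ρ)) • e - α • d‖ ≤ β * (1 - α * ρ) * ‖e‖ := by
  subst hβ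
  have hαρ : 0 ≤ 1 - α * ρ := by nlinarith
  refine le_of_pow_le_pow_left₀ two_ne_zero
    (mul_nonneg (mul_nonneg (by nlinarith) hαρ) (norm_nonneg e)) ?_
  rw [norm_smul_sub_smul_sq, real_inner_comm]
  have hweight : 0 ≤ 2 * α ^ 2 * ρ * (1 - α * (σ + ρ) / 2) :=
    mul_nonneg (by positivity) (by linarith)
  nlinarith [mul_le_mul_of_nonneg_left hcoco (sq_nonneg α), mul_le_mul_of_nonneg_left hmono hweight]

variable [CompleteSpace E] {g : E → ℝ} {g' : E → E}

theorem HasGradientAt.sub {h : E → ℝ} {x a b : E} (hg : HasGradientAt g a x)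
    (hh : HasGradientAt h b x) : HasGradientAt (fun y => g y - h y) (a - b) x := by
  rw [hasGradientAt_iff_hasFDerivAt, map_sub]
  exact hg.hasFDerivAt.sub hh.hasFDerivAt

theorem hasGradientAt_div_two_mul_norm_sq (c : ℝ) (x : E) :
    HasGradientAt (fun y => c / 2 * ‖y‖ ^ 2) (c • x) x := by
  rw [hasGradientAt_iff_hasFDerivAt]
  refine ((hasStrictFDerivAt_norm_sq x).hasFDerivAt.const_mul (c / 2)).congr_fderiv ?_
  ext v
  simp only [smul_apply, coe_innerSL_apply, nsmul_eq_mul, Nat.cast_ofNat,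
    smul_eq_mul, map_smul, InnerProductSpace.toDual_apply_apply]
  ring

theorem hasDerivAt_comp_lineMap (hg : ∀ x, HasGradientAt g (g' x) x) (x y : E) (t : ℝ) :
    HasDerivAt (g ∘ lineMap x y) ⟪g' (lineMap x y t), y - x⟫ t := by
  simpa [InnerProductSpace.toDual_apply_apply] using
    (hg _).hasFDerivAt.comp_hasDerivAt t hasDerivAt_lineMap

theorem ConvexOn.add_inner_gradient_le (hc : ConvexOn ℝ univ g)
    (hg : ∀ x, HasGradientAt g (g' x) x) (x y : E) : g x + ⟪g' x, y - x⟫ ≤ g y := by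
  have h := (hc.comp_affineMap (lineMap x y)).le_slope_of_hasDerivAt (mem_univ 0) (mem_univ 1)
    one_pos (hasDerivAt_comp_lineMap hg x y 0)
  simp only [lineMap_apply_zero, slope_def_field, Function.comp_apply, lineMap_apply_one,
    sub_zero, div_one] at h
  linarith

theorem convexOn_univ_of_inner_gradient_sub_nonneg (hg : ∀ x, HasGradientAt g (g' x) x)
    (hmono : ∀ u v, 0 ≤ ⟪g' u - g' v, u - v⟫) : ConvexOn ℝ univ g := by
  refine ⟨convex_univ, fun x _ y _ a b ha hb hab => ?_⟩
  have hderiv := hasDerivAt_comp_lineMap hg x y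
  have hline : ConvexOn ℝ univ (g ∘ lineMap (k := ℝ) x y) := by
    refine Monotone.convexOn_univ_of_deriv (fun t => (hderiv t).differentiableAt) ?_
    intro s t hst
    rw [(hderiv s).deriv, (hderiv t).deriv, ← sub_nonneg, ← inner_sub_left]
    rcases hst.eq_or_lt with rfl | hlt
    · simp
    have hsub : lineMap x y t - lineMap x y s = (t - s) • (y - x) := by
      simp only [lineMap_apply_module']
      module
    have h := hmono (lineMap x y t) (lineMap x y s)
    rw [hsub, real_inner_smul_right] at h
    exact nonneg_of_mul_nonneg_right h (sub_pos.2 hlt)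
  have h := hline.2 (mem_univ 0) (mem_univ 1) ha hb hab
  obtain rfl : a = 1 - b := by linarith
  simpa [lineMap_apply_module] using h

theorem convexOn_univ_div_two_mul_norm_sq_sub_of_lipschitz {L : ℝ}
    (hg : ∀ x, HasGradientAt g (g' x) x) (hlip : ∀ x y, ‖g' x - g' y‖ ≤ L * ‖x - y‖) :
    ConvexOn ℝ univ fun x => L / 2 * ‖x‖ ^ 2 - g x := by
  refine convexOn_univ_of_inner_gradient_sub_nonneg
    (fun x => (hasGradientAt_div_two_mul_norm_sq L x).sub (hg x)) fun u v => ?_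
  have hsplit : L • u - g' u - (L • v - g' v) = L • (u - v) - (g' u - g' v) := by module
  rw [hsplit, inner_sub_left, real_inner_smul_left, real_inner_self_eq_norm_sq]
  nlinarith [real_inner_le_norm (g' u - g' v) (u - v), hlip u v, norm_nonneg (u - v)]

theorem le_add_inner_gradient_add_norm_sq {L : ℝ} (hg : ∀ x, HasGradientAt g (g' x) x)
    (hc : ConvexOn ℝ univ fun x => L / 2 * ‖x‖ ^ 2 - g x) (x y : E) :
    g y ≤ g x + ⟪g' x, y - x⟫ + L / 2 * ‖y - x‖ ^ 2 := by
  have h := hc.add_inner_gradient_le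
    (fun z => (hasGradientAt_div_two_mul_norm_sq L z).sub (hg z)) x y
  rw [inner_sub_left, real_inner_smul_left, inner_sub_right, real_inner_self_eq_norm_sq] at h
  rw [norm_sub_sq_real, real_inner_comm x y]
  linarith

theorem ConvexOn.add_inner_gradient_add_norm_sq_le {L : ℝ} (hconv : ConvexOn ℝ univ g)
    (hg : ∀ x, HasGradientAt g (g' x) x) (hc : ConvexOn ℝ univ fun x => L / 2 * ‖x‖ ^ 2 - g x)
    (hL : 0 < L) (x y : E) :
    g x + ⟪g' x, y - x⟫ + ‖g' y - g' x‖ ^ 2 / (2 * L) ≤ g y := by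
  set d := g' y - g' x
  -- `w` is the gradient step from `y` for `g - ⟪g' x, ·⟫`, whose minimum is attained at `x`.
  set w := y - L⁻¹ • d
  have htangent := hconv.add_inner_gradient_le hg x w
  have hdescent := le_add_inner_gradient_add_norm_sq hg hc y w
  have hwx : w - x = (y - x) - L⁻¹ • d := by module
  have hwy : w - y = -(L⁻¹ • d) := by module
  rw [hwx, inner_sub_right, real_inner_smul_right] at htangent
  rw [hwy, inner_neg_right, norm_neg, real_inner_smul_right, norm_smul, Real.norm_eq_abs,
    abs_of_pos (inv_pos.2 hL)] at hdescent
  have hd : ⟪g' y, d⟫ - ⟪g' x, d⟫ = ‖d‖ ^ 2 := by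
    rw [← inner_sub_left, real_inner_self_eq_norm_sq]
  have : ‖d‖ ^ 2 / (2 * L) = L⁻¹ * (⟪g' y, d⟫ - ⟪g' x, d⟫) - L / 2 * (L⁻¹ * ‖d‖) ^ 2 := by
    rw [hd]; field_simp; ring
  linarith

theorem ConvexOn.norm_gradient_sub_sq_le {L : ℝ} (hconv : ConvexOn ℝ univ g)
    (hg : ∀ x, HasGradientAt g (g' x) x) (hc : ConvexOn ℝ univ fun x => L / 2 * ‖x‖ ^ 2 - g x)
    (hL : 0 < L) (x y : E) : ‖g' x - g' y‖ ^ 2 ≤ L * ⟪g' x - g' y, x - y⟫ := by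
  have hxy := hconv.add_inner_gradient_add_norm_sq_le hg hc hL x y
  have hyx := hconv.add_inner_gradient_add_norm_sq_le hg hc hL y x
  rw [norm_sub_rev, ← neg_sub x y, inner_neg_right] at hxy
  have hsum : ‖g' x - g' y‖ ^ 2 / L ≤ ⟪g' x - g' y, x - y⟫ := by
    rw [inner_sub_left]
    have : ‖g' x - g' y‖ ^ 2 / L
        = ‖g' x - g' y‖ ^ 2 / (2 * L) + ‖g' x - g' y‖ ^ 2 / (2 * L) := by ring
    linarith
  rwa [div_le_iff₀ hL, mul_comm] at hsum

theorem inner_gradient_sub_bounds_of_strongConvex {f : E → ℝ} {f' : E → E} {ρ σ : ℝ}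
    (hf : ∀ x, HasGradientAt f (f' x) x) (hρσ : ρ < σ)
    (hstrong : ConvexOn ℝ univ fun x => f x - ρ / 2 * ‖x‖ ^ 2)
    (hlip : ∀ x y, ‖f' x - f' y‖ ≤ σ * ‖x - y‖) (x y : E) :
    ρ * ‖x - y‖ ^ 2 ≤ ⟪f' x - f' y, x - y⟫ ∧
      ‖f' x - f' y‖ ^ 2 + ρ * σ * ‖x - y‖ ^ 2 ≤ (σ + ρ) * ⟪f' x - f' y, x - y⟫ := by
  have hg x : HasGradientAt (fun x => f x - ρ / 2 * ‖x‖ ^ 2) (f' x - ρ • x) x :=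
    (hf x).sub (hasGradientAt_div_two_mul_norm_sq ρ x)
  have hsmooth : ConvexOn ℝ univ fun x => (σ - ρ) / 2 * ‖x‖ ^ 2 - (f x - ρ / 2 * ‖x‖ ^ 2) := by
    convert convexOn_univ_div_two_mul_norm_sq_sub_of_lipschitz hf hlip using 2 with z
    ring
  have hcoco := hstrong.norm_gradient_sub_sq_le hg hsmooth (sub_pos.2 hρσ) x y
  have hsplit : f' x - ρ • x - (f' y - ρ • y) = (f' x - f' y) - ρ • (x - y) := by module
  have hnorm : ‖(f' x - f' y) - ρ • (x - y)‖ ^ 2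
      = ‖f' x - f' y‖ ^ 2 - 2 * ρ * ⟪f' x - f' y, x - y⟫ + ρ ^ 2 * ‖x - y‖ ^ 2 := by
    simpa using norm_smul_sub_smul_sq 1 ρ (f' x - f' y) (x - y)
  have hinner : ⟪(f' x - f' y) - ρ • (x - y), x - y⟫
      = ⟪f' x - f' y, x - y⟫ - ρ * ‖x - y‖ ^ 2 := by
    rw [inner_sub_left, real_inner_smul_left, real_inner_self_eq_norm_sq]
  rw [hsplit, hinner] at hcoco
  have hnonneg : 0 ≤ ⟪f' x - f' y, x - y⟫ - ρ * ‖x - y‖ ^ 2 :=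
    nonneg_of_mul_nonneg_right (hcoco.trans' (sq_nonneg _)) (sub_pos.2 hρσ)
  rw [hnorm] at hcoco
  constructor <;> nlinarith

end InnerProductSpace

theorem gradient_step_averaged_general
    (n : ℕ)
    (f : EuclideanSpace ℝ (Fin n) → ℝ)
    (f' : EuclideanSpace ℝ (Fin n) → EuclideanSpace ℝ (Fin n))
    (hf' : ∀ x, HasGradientAt f (f' x) x)
    (ρ σ α : ℝ) (hρ : 0 ≤ ρ) (hσρ : ρ < σ)
    (hstrong : ConvexOn ℝ univ (fun x => f x - ρ / 2 * ‖x‖ ^ 2))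
    (hlip : ∀ x y, ‖f' x - f' y‖ ≤ σ * ‖x - y‖)
    (hα : 0 < α) (hα2 : α < 2 / (σ + ρ))
    (V : EuclideanSpace ℝ (Fin n) → EuclideanSpace ℝ (Fin n))
    (hV : ∀ x, V x = (1 / (1 - α * ρ)) • (x - α • f' x)) :
    α * (σ + ρ) / 2 ∈ Ioo (0 : ℝ) 1 ∧
      ∃ U : EuclideanSpace ℝ (Fin n) → EuclideanSpace ℝ (Fin n),
        LipschitzWith 1 U ∧
          ∀ x, V x = (1 - α * (σ + ρ) / 2) • x + (α * (σ + ρ) / 2) • U x := by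
  set β := α * (σ + ρ) / 2 with hβ
  have hβ0 : 0 < β := div_pos (mul_pos hα (by linarith)) two_pos
  have hβ1 : β < 1 := by
    rw [lt_div_iff₀ (by linarith)] at hα2
    linarith
  have hαρ : 0 < 1 - α * ρ := by nlinarith
  set c := β * (1 - α * ρ)
  have hc : 0 < c := mul_pos hβ0 hαρ
  -- `(V - (1 - β) I) / β`, with `V` expanded
  refine ⟨⟨hβ0, hβ1⟩, fun z => c⁻¹ • ((α * ρ + c) • z - α • f' z), ?_, fun x => ?_⟩
  · refine LipschitzWith.of_dist_le_mul fun x y => ?_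
    obtain ⟨hmono, hcoco⟩ := inner_gradient_sub_bounds_of_strongConvex hf' hσρ hstrong hlip x y
    have hdiff : c⁻¹ • ((α * ρ + c) • x - α • f' x) - c⁻¹ • ((α * ρ + c) • y - α • f' y)
        = c⁻¹ • ((α * ρ + c) • (x - y) - α • (f' x - f' y)) := by module
    rw [dist_eq_norm, dist_eq_norm, hdiff, norm_smul, Real.norm_eq_abs,
      abs_of_pos (inv_pos.2 hc), NNReal.coe_one, one_mul, inv_mul_le_iff₀ hc]
    exact norm_smul_sub_smul_le_of_cocoercive hρ hσρ.le hα.le hβ hβ1.le hmono hcoco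
  · rw [hV x]
    match_scalars <;> field_simp <;> ring
end

section
/- Under the hypotheses that P is ρ-weakly convex, f is differentiable with σ-Lipschitz gradient, αρ < 1, and 0 < α < 2/(σ + ρ), the ISTA iterates x^{k+1} = T_α(x^k − α∇f(x^k)) satisfy the monotone descent property D(x^{k+1}) ≤ D(x^k), where D = f + P. -/
open Set Filter Topology

/-!
Weak convexity of `P` is strong convexity with the negative modulus `-ρ`, so the proximal
objective `t ↦ ‖t - z‖² / (2α) + P t` is `(1/α - ρ)`-strongly convex and its minimizer `x⁺`
satisfies a quadratic growth bound. With `z = x - α ∇f(x)` this bound reads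
`P x⁺ + ⟪∇f x, x⁺ - x⟫ + (1/α - ρ/2) ‖x⁺ - x‖² ≤ P x`. Adding the descent lemma
`f x⁺ ≤ f x + ⟪∇f x, x⁺ - x⟫ + σ/2 ‖x⁺ - x‖²` gives
`D x⁺ + (1/α - (σ + ρ)/2) ‖x⁺ - x‖² ≤ D x`, and `α < 2 / (σ + ρ)` makes the coefficient
nonnegative.
-/

section

variable {E : Type*} [NormedAddCommGroup E]

theorem le_add_fderiv_add_sq_of_lipschitz_fderiv [NormedSpace ℝ E] {f : E → ℝ}
    {f' : E → StrongDual ℝ E} {σ : ℝ} (hf : ∀ x, HasFDerivAt f (f' x) x)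
    (hlip : ∀ x y, ‖f' x - f' y‖ ≤ σ * ‖x - y‖) (x y : E) :
    f y ≤ f x + f' x (y - x) + σ / 2 * ‖y - x‖ ^ 2 := by
  set d := y - x
  -- the slack of the quadratic upper bound at `x + t • d`: antitone on `t ≥ 0`, and `F 0 = f x`
  set F : ℝ → ℝ := fun t => f (x + t • d) - t * f' x d - σ * ‖d‖ ^ 2 / 2 * t ^ 2
  have hF : ∀ t, HasDerivAt F (f' (x + t • d) d - f' x d - σ * ‖d‖ ^ 2 * t) t := by
    intro t
    have hline : HasDerivAt (fun t : ℝ => x + t • d) d t := by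
      simpa using ((hasDerivAt_id t).smul_const d).const_add x
    refine ((((hf _).comp_hasDerivAt t hline).sub ((hasDerivAt_id t).mul_const (f' x d))).sub
      ((hasDerivAt_pow 2 t).const_mul (σ * ‖d‖ ^ 2 / 2))).congr_deriv ?_
    norm_num
    ring
  have hderiv_nonpos : ∀ t ∈ interior (Ici (0 : ℝ)),
      f' (x + t • d) d - f' x d - σ * ‖d‖ ^ 2 * t ≤ 0 := by
    intro t ht
    rw [interior_Ici, mem_Ioi] at ht
    suffices f' (x + t • d) d - f' x d ≤ σ * ‖d‖ ^ 2 * t by linarith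
    have hlip_t : ‖f' (x + t • d) - f' x‖ ≤ σ * (t * ‖d‖) := by
      simpa [norm_smul, abs_of_pos ht] using hlip (x + t • d) x
    calc f' (x + t • d) d - f' x d = (f' (x + t • d) - f' x) d := by simp
      _ ≤ ‖f' (x + t • d) - f' x‖ * ‖d‖ :=
          (Real.le_norm_self _).trans (ContinuousLinearMap.le_opNorm _ _)
      _ ≤ σ * (t * ‖d‖) * ‖d‖ := by gcongr
      _ = σ * ‖d‖ ^ 2 * t := by ring
  have hanti : AntitoneOn F (Ici 0) :=
    antitoneOn_of_hasDerivWithinAt_nonpos (convex_Ici 0)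
      (fun t _ => (hF t).continuousAt.continuousWithinAt)
      (fun t _ => (hF t).hasDerivWithinAt) hderiv_nonpos
  have h01 := hanti self_mem_Ici (show (0 : ℝ) ≤ 1 by norm_num) zero_le_one
  simp only [F, d, one_smul, zero_smul, add_zero, add_sub_cancel] at h01
  linarith

theorem le_add_inner_gradient_add_sq_of_lipschitz_gradient [InnerProductSpace ℝ E]
    [CompleteSpace E] {f : E → ℝ} {f' : E → E} {σ : ℝ} (hf : ∀ x, HasGradientAt f (f' x) x)
    (hlip : ∀ x y, ‖f' x - f' y‖ ≤ σ * ‖x - y‖) (x y : E) :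
    f y ≤ f x + inner ℝ (f' x) (y - x) + σ / 2 * ‖y - x‖ ^ 2 :=
  le_add_fderiv_add_sq_of_lipschitz_fderiv (f' := fun x => InnerProductSpace.toDual ℝ E (f' x))
    (fun x => (hf x).hasFDerivAt)
    (fun x y => by rw [← map_sub, LinearIsometryEquiv.norm_map]; exact hlip x y) x y

theorem StrongConvexOn.add_sq_le_of_isMinOn [NormedSpace ℝ E] {s : Set E} {m : ℝ}
    {φ : E → ℝ} (hφ : StrongConvexOn s m φ) {x y : E} (hmin : IsMinOn φ s x) (hx : x ∈ s)
    (hy : y ∈ s) : φ x + m / 2 * ‖y - x‖ ^ 2 ≤ φ y := by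
  -- compare `φ x` with `φ` at the point `l` of the way to `y`, divide by `l`, and let `l → 0`
  have hlim : Tendsto (fun l : ℝ => φ x + (1 - l) * (m / 2 * ‖y - x‖ ^ 2)) (𝓝[>] 0)
      (𝓝 (φ x + m / 2 * ‖y - x‖ ^ 2)) := by
    have hcont : Continuous (fun l : ℝ => φ x + (1 - l) * (m / 2 * ‖y - x‖ ^ 2)) := by fun_prop
    simpa using (hcont.tendsto 0).mono_left nhdsWithin_le_nhds
  refine le_of_tendsto hlim ?_
  filter_upwards [Ioo_mem_nhdsGT zero_lt_one] with l ⟨hl0, hl1⟩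
  have hconv := hφ.2 hy hx hl0.le (sub_nonneg.mpr hl1.le) (add_sub_cancel l 1)
  have hle := isMinOn_iff.mp hmin _
    (hφ.1 hy hx hl0.le (sub_nonneg.mpr hl1.le) (add_sub_cancel l 1))
  rw [smul_eq_mul, smul_eq_mul] at hconv
  have : l * (φ x + (1 - l) * (m / 2 * ‖y - x‖ ^ 2)) ≤ l * φ y := by nlinarith
  exact le_of_mul_le_mul_left this hl0

noncomputable def proxObjective (P : E → ℝ) (α : ℝ) (z : E) (t : E) : ℝ :=
  1 / (2 * α) * ‖t - z‖ ^ 2 + P t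

theorem StrongConvexOn.proxObjective [InnerProductSpace ℝ E] {s : Set E} {m : ℝ} {P : E → ℝ}
    (hP : StrongConvexOn s m P) (α : ℝ) (z : E) :
    StrongConvexOn s (m + 1 / α) (proxObjective P α z) := by
  rw [strongConvexOn_iff_convex] at hP ⊢
  have hlin : ConcaveOn ℝ s ((1 / α) • innerₛₗ ℝ z) := LinearMap.concaveOn _ hP.1
  refine ((hP.add_const (1 / (2 * α) * ‖z‖ ^ 2)).sub hlin).congr fun t _ => ?_
  simp only [_root_.proxObjective, Pi.sub_apply, Pi.add_apply, LinearMap.smul_apply,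
    innerₛₗ_apply_apply, smul_eq_mul, norm_sub_sq_real, real_inner_comm t z]
  ring

theorem proxGrad_step_sufficient_decrease [InnerProductSpace ℝ E] [CompleteSpace E]
    {f P : E → ℝ} {f' : E → E} {ρ σ α : ℝ}
    (hf : ∀ x, HasGradientAt f (f' x) x) (hlip : ∀ x y, ‖f' x - f' y‖ ≤ σ * ‖x - y‖)
    (hP : StrongConvexOn univ (-ρ) P) (hα : α ≠ 0) {x y : E}
    (hy : IsMinOn (proxObjective P α (x - α • f' x)) univ y) :
    f y + P y + (1 / α - (σ + ρ) / 2) * ‖y - x‖ ^ 2 ≤ f x + P x := by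
  have hprox :=
    (hP.proxObjective α (x - α • f' x)).add_sq_le_of_isMinOn hy (mem_univ y) (mem_univ x)
  have hdescent := le_add_inner_gradient_add_sq_of_lipschitz_gradient hf hlip x y
  have hexpand : 1 / (2 * α) * (‖y - (x - α • f' x)‖ ^ 2 - ‖x - (x - α • f' x)‖ ^ 2)
      = 1 / (2 * α) * ‖y - x‖ ^ 2 + inner ℝ (f' x) (y - x) := by
    rw [show y - (x - α • f' x) = (y - x) + α • f' x by abel, sub_sub_cancel, norm_add_sq_real,
      real_inner_smul_right, real_inner_comm]
    field_simp
    ring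
  simp only [proxObjective, norm_sub_rev x y] at hprox
  linear_combination hprox + hdescent - hexpand

end

theorem ista_monotone_descent_general
    (n : ℕ)
    (P f : EuclideanSpace ℝ (Fin n) → ℝ)
    (f' : EuclideanSpace ℝ (Fin n) → EuclideanSpace ℝ (Fin n))
    (hf' : ∀ x, HasGradientAt f (f' x) x)
    (ρ σ α : ℝ)
    (hweak : ConvexOn ℝ univ (fun x => P x + ρ / 2 * ‖x‖ ^ 2))
    (hlip : ∀ x y, ‖f' x - f' y‖ ≤ σ * ‖x - y‖)
    (hα : 0 < α) (hα2 : α < 2 / (σ + ρ))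
    (T : EuclideanSpace ℝ (Fin n) → EuclideanSpace ℝ (Fin n))
    (hT : ∀ z t, 1 / (2 * α) * ‖T z - z‖ ^ 2 + P (T z) ≤ 1 / (2 * α) * ‖t - z‖ ^ 2 + P t)
    (x : ℕ → EuclideanSpace ℝ (Fin n))
    (hrec : ∀ k, x (k + 1) = T (x k - α • f' (x k))) :
    ∀ k, f (x (k + 1)) + P (x (k + 1)) ≤ f (x k) + P (x k) := by
  have hσρ : 0 < σ + ρ := (div_pos_iff_of_pos_left two_pos).mp (hα.trans hα2)
  have hgap : 0 ≤ 1 / α - (σ + ρ) / 2 := by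
    rw [lt_div_iff₀ hσρ] at hα2
    rw [sub_nonneg, div_le_div_iff₀ two_pos hα]
    linarith
  have hP : StrongConvexOn univ (-ρ) P :=
    strongConvexOn_iff_convex.mpr (by simpa [neg_div] using hweak)
  intro k
  have hmin : IsMinOn (proxObjective P α (x k - α • f' (x k))) univ (x (k + 1)) := by
    rw [hrec k]
    exact isMinOn_univ_iff.mpr (hT _)
  have hstep := proxGrad_step_sufficient_decrease hf' hlip hP hα.ne' hmin
  linarith [mul_nonneg hgap (sq_nonneg ‖x (k + 1) - x k‖)]

theorem ista_monotone_descent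
    (n : ℕ)
    (P f : EuclideanSpace ℝ (Fin n) → ℝ)
    (f' : EuclideanSpace ℝ (Fin n) → EuclideanSpace ℝ (Fin n))
    (hf' : ∀ x, HasGradientAt f (f' x) x)
    (ρ σ α : ℝ) (hρ : 0 ≤ ρ)
    (hweak : ConvexOn ℝ univ (fun x => P x + ρ / 2 * ‖x‖ ^ 2))
    (hlip : ∀ x y, ‖f' x - f' y‖ ≤ σ * ‖x - y‖)
    (hα : 0 < α) (hαρ : α * ρ < 1) (hα2 : α < 2 / (σ + ρ))
    (T : EuclideanSpace ℝ (Fin n) → EuclideanSpace ℝ (Fin n))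
    (hT : ∀ z t, 1 / (2 * α) * ‖T z - z‖ ^ 2 + P (T z) ≤ 1 / (2 * α) * ‖t - z‖ ^ 2 + P t)
    (x : ℕ → EuclideanSpace ℝ (Fin n))
    (hrec : ∀ k, x (k + 1) = T (x k - α • f' (x k))) :
    ∀ k, f (x (k + 1)) + P (x (k + 1)) ≤ f (x k) + P (x k) :=
  ista_monotone_descent_general n P f f' hf' ρ σ α hweak hlip hα hα2 T hT x hrec
end

section
/- For a linear map H and 0 < α with ασ_M < 1 where σ_M is the largest eigenvalue of HᵀH, the surrogate M(x, x^k) = C(x) + (1/2)⟨x − x^k, (α⁻¹I − HᵀH)(x − x^k)⟩ majorizes C: M(x, x^k) ≥ C(x) for all x, with equality at x = x^k; consequently the MM iterate x^{k+1} = argmin_x M(x, x^k) satisfies C(x^{k+1}) ≤ C(x^k). -/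
open Set

theorem le_inv_mul_of_mul_lt_one {α σ t : ℝ} (hα : 0 < α) (hασ : α * σ < 1) (ht : 0 ≤ t) :
    σ * t ≤ α⁻¹ * t := by
  have hσ : σ < α⁻¹ := by simpa using (lt_inv_mul_iff₀ hα (b := 1)).2 (by simpa using hασ)
  exact mul_le_mul_of_nonneg_right hσ.le ht

theorem le_of_majorizes_of_forall_le {X : Type*} {C : X → ℝ} {M : X → X → ℝ} {z x₁ : X}
    (hmaj : ∀ x, C x ≤ M x z) (htouch : M z z = C z) (hmin : ∀ x, M x₁ z ≤ M x z) :
    C x₁ ≤ C z :=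
  calc C x₁ ≤ M x₁ z := hmaj x₁
    _ ≤ M z z := hmin z
    _ = C z := htouch

theorem mm_surrogate_majorizes_and_descends_general
    (n m : ℕ)
    (H : EuclideanSpace ℝ (Fin n) →ₗ[ℝ] EuclideanSpace ℝ (Fin m))
    (σM α : ℝ)
    (heig_hi : ∀ x : EuclideanSpace ℝ (Fin n), (inner ℝ (H x) (H x) : ℝ) ≤ σM * ‖x‖ ^ 2)
    (hα : 0 < α) (hασ : α * σM < 1)
    (C : EuclideanSpace ℝ (Fin n) → ℝ)
    (Msur : EuclideanSpace ℝ (Fin n) → EuclideanSpace ℝ (Fin n) → ℝ)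
    (hM : ∀ x z, Msur x z =
      C x + 1 / 2 * (α⁻¹ * ‖x - z‖ ^ 2 - (inner ℝ (H (x - z)) (H (x - z)) : ℝ)))
    (xk : EuclideanSpace ℝ (Fin n)) :
    (∀ x, C x ≤ Msur x xk) ∧ Msur xk xk = C xk ∧
      ∀ x1, (∀ x, Msur x1 xk ≤ Msur x xk) → C x1 ≤ C xk := by
  have hmaj : ∀ x, C x ≤ Msur x xk := fun x => by
    have hgap : (inner ℝ (H (x - xk)) (H (x - xk)) : ℝ) ≤ α⁻¹ * ‖x - xk‖ ^ 2 :=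
      (heig_hi (x - xk)).trans (le_inv_mul_of_mul_lt_one hα hασ (sq_nonneg _))
    rw [hM]
    linarith
  have htouch : Msur xk xk = C xk := by simp [hM]
  exact ⟨hmaj, htouch, fun _ hmin => le_of_majorizes_of_forall_le hmaj htouch hmin⟩

theorem mm_surrogate_majorizes_and_descends
    (n m : ℕ)
    (H : EuclideanSpace ℝ (Fin n) →ₗ[ℝ] EuclideanSpace ℝ (Fin m))
    (y : EuclideanSpace ℝ (Fin m))
    (P : EuclideanSpace ℝ (Fin n) → ℝ)
    (σm σM ρ α : ℝ)
    (heig_lo : ∀ x : EuclideanSpace ℝ (Fin n), σm * ‖x‖ ^ 2 ≤ (inner ℝ (H x) (H x) : ℝ))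
    (heig_hi : ∀ x : EuclideanSpace ℝ (Fin n), (inner ℝ (H x) (H x) : ℝ) ≤ σM * ‖x‖ ^ 2)
    (hρ0 : 0 ≤ ρ) (hρσ : ρ ≤ σm)
    (hweak : ConvexOn ℝ univ (fun x => P x + ρ / 2 * ‖x‖ ^ 2))
    (hα : 0 < α) (hασ : α * σM < 1)
    (C : EuclideanSpace ℝ (Fin n) → ℝ)
    (hC : ∀ x, C x = 1 / 2 * ‖y - H x‖ ^ 2 + P x)
    (Msur : EuclideanSpace ℝ (Fin n) → EuclideanSpace ℝ (Fin n) → ℝ)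
    (hM : ∀ x z, Msur x z =
      C x + 1 / 2 * (α⁻¹ * ‖x - z‖ ^ 2 - (inner ℝ (H (x - z)) (H (x - z)) : ℝ)))
    (xk : EuclideanSpace ℝ (Fin n)) :
    (∀ x, C x ≤ Msur x xk) ∧ Msur xk xk = C xk ∧
      ∀ x1, (∀ x, Msur x1 xk ≤ Msur x xk) → C x1 ≤ C xk :=
  mm_surrogate_majorizes_and_descends_general n m H σM α heig_hi hα hασ C Msur hM xk
end

section
/- Under the hypotheses of the MM setup (P ρ-weakly convex with ρ ≤ σₘ, σ_M < 1/α, x^{k+1} = T_α(x^k + αHᵀ(y − Hx^k))), for any x: M(x, x^k) − M(x^{k+1}, x^k) ≥ (1/(2α) − ρ/2)‖x − x^{k+1}‖² ≥ g(x, x^{k+1}), where g(x, z) = (1/2)⟨x − z, (α⁻¹I − HᵀH)(x − z)⟩ and M(x, z) = C(x) + g(x, z). -/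
open Set Filter Topology

/-
The quadratic part of the surrogate `M(·, xᵏ)` is, up to a constant, `(2α)⁻¹‖· - z‖²` with
`z = xᵏ + α Hᵀ(y - Hxᵏ)` the gradient step, so `M(·, xᵏ) = (2α)⁻¹‖· - z‖² + P + const`, a
`(α⁻¹ - ρ)`-strongly convex function minimised by `xᵏ⁺¹ = T_α z`. A strongly convex function
exceeds its minimum by at least `m/2` times the squared distance to the minimiser; the second
inequality is `HᵀH ⪰ σₘ I ⪰ ρ I`.
-/

section NormedSpace

variable {E : Type*} [NormedAddCommGroup E] [NormedSpace ℝ E] {s : Set E} {φ : ℝ → ℝ}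
  {f : E → ℝ} {m n : ℝ}

theorem StrongConvexOn.add {g : E → ℝ} (hf : StrongConvexOn s m f) (hg : StrongConvexOn s n g) :
    StrongConvexOn s (m + n) (f + g) :=
  (UniformConvexOn.add hf hg).mono fun r ↦ le_of_eq (by simp only [Pi.add_apply]; ring)

theorem UniformConvexOn.le_sub_of_isMinOn {x₀ x : E} (hf : UniformConvexOn s φ f)
    (hmin : IsMinOn f s x₀) (hx₀ : x₀ ∈ s) (hx : x ∈ s) :
    φ ‖x - x₀‖ ≤ f x - f x₀ := by
  have hle : ∀ t ∈ Ioo (0 : ℝ) 1, (1 - t) * φ ‖x - x₀‖ ≤ f x - f x₀ := by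
    rintro t ⟨ht0, ht1⟩
    have hconv := hf.2 hx hx₀ ht0.le (sub_nonneg.2 ht1.le) (add_sub_cancel t 1)
    have hmin_t : f x₀ ≤ f (t • x + (1 - t) • x₀) :=
      hmin (hf.1 hx hx₀ ht0.le (sub_nonneg.2 ht1.le) (add_sub_cancel t 1))
    simp only [smul_eq_mul] at hconv
    have : t * ((1 - t) * φ ‖x - x₀‖) ≤ t * (f x - f x₀) := by linarith
    exact le_of_mul_le_mul_left this ht0
  have hlim : Tendsto (fun t : ℝ ↦ (1 - t) * φ ‖x - x₀‖) (𝓝[>] 0) (𝓝 (φ ‖x - x₀‖)) := by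
    have : Tendsto (fun t : ℝ ↦ (1 - t) * φ ‖x - x₀‖) (𝓝 0) (𝓝 ((1 - 0) * φ ‖x - x₀‖)) :=
      ((continuous_const.sub continuous_id).mul continuous_const).tendsto 0
    simpa using this.mono_left nhdsWithin_le_nhds
  exact le_of_tendsto hlim (eventually_of_mem (Ioo_mem_nhdsGT one_pos) hle)

end NormedSpace

section InnerProductSpace

variable {E F : Type*} [NormedAddCommGroup E] [InnerProductSpace ℝ E]
  [NormedAddCommGroup F] [InnerProductSpace ℝ F]

theorem strongConvexOn_sq_norm_sub {s : Set E} (hs : Convex ℝ s) (m : ℝ) (z : E) :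
    StrongConvexOn s m fun x ↦ m / 2 * ‖x - z‖ ^ 2 := by
  rw [strongConvexOn_iff_convex]
  have haffine : (fun x ↦ m / 2 * ‖x - z‖ ^ 2 - m / 2 * ‖x‖ ^ 2)
      = fun x ↦ ((-m) • innerₛₗ ℝ z) x + m / 2 * ‖z‖ ^ 2 := by
    ext x
    simp only [LinearMap.smul_apply, innerₛₗ_apply_apply, smul_eq_mul, norm_sub_sq_real,
      real_inner_comm x z]
    ring
  rw [haffine]
  exact (LinearMap.convexOn _ hs).add_const _

theorem leastSquares_add_majorizer_eq_sq_norm_sub_gradientStep [FiniteDimensional ℝ E]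
    [FiniteDimensional ℝ F] (H : E →ₗ[ℝ] F) (y : F) (x t : E) {α : ℝ} (hα : α ≠ 0) :
    1 / 2 * ‖y - H t‖ ^ 2 + 1 / 2 * (α⁻¹ * ‖t - x‖ ^ 2 - inner ℝ (H (t - x)) (H (t - x)))
      = α⁻¹ / 2 * ‖t - (x + α • LinearMap.adjoint H (y - H x))‖ ^ 2
        + (1 / 2 * ‖y - H x‖ ^ 2 - α / 2 * ‖LinearMap.adjoint H (y - H x)‖ ^ 2) := by
  have hstep : t - (x + α • LinearMap.adjoint H (y - H x))
      = (t - x) - α • LinearMap.adjoint H (y - H x) := by abel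
  have hres : y - H t = (y - H x) - H (t - x) := by rw [map_sub]; abel
  rw [hstep, hres, norm_sub_sq_real (y - H x), norm_sub_sq_real (t - x), real_inner_smul_right,
    LinearMap.adjoint_inner_right, norm_smul, Real.norm_eq_abs, mul_pow, sq_abs,
    real_inner_self_eq_norm_sq, real_inner_comm (H (t - x))]
  field_simp
  ring

end InnerProductSpace

theorem mm_summa_key_inequality_general
    (n m : ℕ)
    (H : EuclideanSpace ℝ (Fin n) →ₗ[ℝ] EuclideanSpace ℝ (Fin m))
    (y : EuclideanSpace ℝ (Fin m))
    (P : EuclideanSpace ℝ (Fin n) → ℝ)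
    (σm ρ α : ℝ)
    (heig_lo : ∀ x : EuclideanSpace ℝ (Fin n), σm * ‖x‖ ^ 2 ≤ (inner ℝ (H x) (H x) : ℝ))
    (hρσ : ρ ≤ σm)
    (hweak : ConvexOn ℝ univ (fun x => P x + ρ / 2 * ‖x‖ ^ 2))
    (hα : 0 < α)
    (C : EuclideanSpace ℝ (Fin n) → ℝ)
    (hC : ∀ x, C x = 1 / 2 * ‖y - H x‖ ^ 2 + P x)
    (g : EuclideanSpace ℝ (Fin n) → EuclideanSpace ℝ (Fin n) → ℝ)
    (hg : ∀ x z, g x z =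
      1 / 2 * (α⁻¹ * ‖x - z‖ ^ 2 - (inner ℝ (H (x - z)) (H (x - z)) : ℝ)))
    (Msur : EuclideanSpace ℝ (Fin n) → EuclideanSpace ℝ (Fin n) → ℝ)
    (hM : ∀ x z, Msur x z = C x + g x z)
    (T : EuclideanSpace ℝ (Fin n) → EuclideanSpace ℝ (Fin n))
    (hT : ∀ z t, 1 / (2 * α) * ‖T z - z‖ ^ 2 + P (T z) ≤ 1 / (2 * α) * ‖t - z‖ ^ 2 + P t)
    (xk xk1 : EuclideanSpace ℝ (Fin n))
    (hxk1 : xk1 = T (xk + α • (LinearMap.adjoint H) (y - H xk))) :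
    ∀ x, Msur x xk - Msur xk1 xk ≥ (1 / (2 * α) - ρ / 2) * ‖x - xk1‖ ^ 2 ∧
      (1 / (2 * α) - ρ / 2) * ‖x - xk1‖ ^ 2 ≥ g x xk1 := by
  intro x
  set z := xk + α • LinearMap.adjoint H (y - H xk)
  set prox := P + fun t ↦ α⁻¹ / 2 * ‖t - z‖ ^ 2
  have hhalf : 1 / (2 * α) = α⁻¹ / 2 := by ring
  have hM_eq : ∀ t, Msur t xk = prox t
      + (1 / 2 * ‖y - H xk‖ ^ 2 - α / 2 * ‖LinearMap.adjoint H (y - H xk)‖ ^ 2) := fun t ↦ by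
    rw [hM, hC, hg]
    have := leastSquares_add_majorizer_eq_sq_norm_sub_gradientStep H y xk t hα.ne'
    simp only [prox, Pi.add_apply]
    linarith
  have hmin : IsMinOn prox univ xk1 := fun t _ ↦ by
    simpa [prox, hxk1, hhalf, add_comm] using hT z t
  have hP : StrongConvexOn univ (-ρ) P := by
    rw [strongConvexOn_iff_convex]
    simpa [neg_div] using hweak
  have hgrowth : (-ρ + α⁻¹) / 2 * ‖x - xk1‖ ^ 2 ≤ prox x - prox xk1 :=
    UniformConvexOn.le_sub_of_isMinOn (hP.add (strongConvexOn_sq_norm_sub convex_univ α⁻¹ z))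
      hmin (mem_univ _) (mem_univ _)
  refine ⟨?_, ?_⟩
  · rw [hM_eq, hM_eq, hhalf]
    linarith
  · rw [hg, hhalf]
    linarith [heig_lo (x - xk1), mul_le_mul_of_nonneg_right hρσ (sq_nonneg ‖x - xk1‖)]

theorem mm_summa_key_inequality
    (n m : ℕ)
    (H : EuclideanSpace ℝ (Fin n) →ₗ[ℝ] EuclideanSpace ℝ (Fin m))
    (y : EuclideanSpace ℝ (Fin m))
    (P : EuclideanSpace ℝ (Fin n) → ℝ)
    (σm σM ρ α : ℝ)
    (heig_lo : ∀ x : EuclideanSpace ℝ (Fin n), σm * ‖x‖ ^ 2 ≤ (inner ℝ (H x) (H x) : ℝ))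
    (heig_hi : ∀ x : EuclideanSpace ℝ (Fin n), (inner ℝ (H x) (H x) : ℝ) ≤ σM * ‖x‖ ^ 2)
    (hρ0 : 0 ≤ ρ) (hρσ : ρ ≤ σm)
    (hweak : ConvexOn ℝ univ (fun x => P x + ρ / 2 * ‖x‖ ^ 2))
    (hα : 0 < α) (hασ : α * σM < 1)
    (C : EuclideanSpace ℝ (Fin n) → ℝ)
    (hC : ∀ x, C x = 1 / 2 * ‖y - H x‖ ^ 2 + P x)
    (g : EuclideanSpace ℝ (Fin n) → EuclideanSpace ℝ (Fin n) → ℝ)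
    (hg : ∀ x z, g x z =
      1 / 2 * (α⁻¹ * ‖x - z‖ ^ 2 - (inner ℝ (H (x - z)) (H (x - z)) : ℝ)))
    (Msur : EuclideanSpace ℝ (Fin n) → EuclideanSpace ℝ (Fin n) → ℝ)
    (hM : ∀ x z, Msur x z = C x + g x z)
    (T : EuclideanSpace ℝ (Fin n) → EuclideanSpace ℝ (Fin n))
    (hT : ∀ z t, 1 / (2 * α) * ‖T z - z‖ ^ 2 + P (T z) ≤ 1 / (2 * α) * ‖t - z‖ ^ 2 + P t)
    (xk xk1 : EuclideanSpace ℝ (Fin n))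
    (hxk1 : xk1 = T (xk + α • (LinearMap.adjoint H) (y - H xk))) :
    ∀ x, Msur x xk - Msur xk1 xk ≥ (1 / (2 * α) - ρ / 2) * ‖x - xk1‖ ^ 2 ∧
      (1 / (2 * α) - ρ / 2) * ‖x - xk1‖ ^ 2 ≥ g x xk1 :=
  mm_summa_key_inequality_general n m H y P σm ρ α heig_lo hρσ hweak hα C hC g hg Msur hM T hT xk
    xk1 hxk1
end
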